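/- Let n = sm with s even, s/2 odd and m odd. Let k be an integer with gcd(k,n)=2, and let f be a permutation of F_{2^s} that is differentially at most 6-uniform on F_{2^s}. Then the function F defined by F(x)=f(x) for x ∈ F_{2^s} and F(x)=x^{2^k+1} for x ∉ F_{2^s} is a permutation of F_{2^n} with differential uniformity at most 6. -/

import Mathlib

/-!
Let `K = 𝔽_{2^s}`, `q = 2^k` and `L_a(x) = a x^q + a^q x`, so that
`(x + a)^(q+1) + x^(q+1) = L_a(x) + a^(q+1)` in characteristic 2. Since `gcd(k, n) = 2`, the
kernel of `L_a` is `a 𝔽_4`, so `L_a(x) = d` has at most four solutions; since `n ≡ 2 (mod 4)`,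
the Gold function `x^(q+1)` is a permutation. Since `n / s` is odd, `x^(2^s) = x + z` with
`z ∈ K` forces `z = 0`; hence `L_a(x) ∈ K` with `0 ≠ a ∈ K` forces `x ∈ K`, and `a ∉ K` gives
`a^(2^s) + a ∉ K`. For `a ∈ K` the solutions of `F(x + a) + F(x) = b` therefore lie either all
in `K` (at most 6, by the hypothesis on `f`) or all outside `K` (at most 4). For `a ∉ K`,
applying `x ↦ x^(2^s)` to the equation leaves at most one solution in `K`, hence at most one in
`K + a`, and at most four elsewhere.
-/

/-- `delta f a b` is the number of `x` with `f (x + a) + f x = b`. -/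
noncomputable def delta {F : Type*} [Field F] (f : F → F) (a b : F) : ℕ :=
  Nat.card {x : F // f (x + a) + f x = b}

/-- `deltaOn S f a b` is the number of `x ∈ S` with `f (x + a) + f x = b`. -/
noncomputable def deltaOn {F : Type*} [Field F] (S : Set F) (f : F → F) (a b : F) : ℕ :=
  Nat.card {x : F // x ∈ S ∧ f (x + a) + f x = b}

open Function

section PowTwoPow

variable {M : Type*} [Monoid M] {x : M} {a b : ℕ}

theorem isPeriodicPt_sq_iff : IsPeriodicPt (· ^ 2) a x ↔ x ^ 2 ^ a = x := by
  rw [IsPeriodicPt, IsFixedPt, pow_iterate]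

theorem pow_two_pow_gcd_eq_self (ha : x ^ 2 ^ a = x) (hb : x ^ 2 ^ b = x) :
    x ^ 2 ^ a.gcd b = x :=
  isPeriodicPt_sq_iff.1 ((isPeriodicPt_sq_iff.2 ha).gcd (isPeriodicPt_sq_iff.2 hb))

theorem pow_two_pow_eq_self_of_dvd (ha : x ^ 2 ^ a = x) (hab : a ∣ b) : x ^ 2 ^ b = x :=
  isPeriodicPt_sq_iff.1 ((isPeriodicPt_sq_iff.2 ha).trans_dvd hab)

end PowTwoPow

theorem AddMonoidHom.iterate_eq_add_nsmul {M : Type*} [AddCommMonoid M] (σ : M →+ M)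
    {x z : M} (hz : σ z = z) (hx : σ x = x + z) (j : ℕ) : σ^[j] x = x + j • z := by
  induction j with
  | zero => simp
  | succ j ih =>
    rw [iterate_succ_apply', ih, map_add, hx, map_nsmul, hz, succ_nsmul]
    abel

theorem Nat.gcd_two_mul_eq_two {k n : ℕ} (hk : k.gcd n = 2) (hn : n % 4 = 2) :
    (2 * k).gcd n = 2 := by
  have h4 : (2 * k).gcd n ∣ 4 := by
    simpa [Nat.gcd_mul_left, hk] using Nat.gcd_dvd_gcd_mul_left_right (2 * k) n 2
  have h2 : 2 ∣ (2 * k).gcd n :=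
    Nat.dvd_gcd (hk ▸ (Nat.gcd_dvd_left k n).mul_left 2) (hk ▸ Nat.gcd_dvd_right k n)
  have hn4 : ¬ 4 ∣ (2 * k).gcd n := fun h => by
    have := h.trans (Nat.gcd_dvd_right _ n)
    omega
  have := Nat.le_of_dvd (by norm_num) h4
  interval_cases h : (2 * k).gcd n <;> omega

theorem Set.ncard_setOf_pow_eq_self_le (F : Type*) [Field F] {q : ℕ} (hq : 1 < q) :
    {x : F | x ^ q = x}.ncard ≤ q := by
  classical
  open Polynomial in
  calc {x : F | x ^ q = x}.ncard
      ≤ ((X ^ q - X : F[X]).roots.toFinset : Set F).ncard := by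
        refine Set.ncard_le_ncard (fun x hx => ?_) (Finset.finite_toSet _)
        simp [FiniteField.X_pow_card_sub_X_ne_zero F hq, sub_eq_zero.2 hx]
    _ ≤ (X ^ q - X : F[X]).natDegree := by
        rw [Set.ncard_coe_finset]
        exact (Multiset.toFinset_card_le _).trans (card_roots' _)
    _ = q := FiniteField.X_pow_card_sub_X_natDegree_eq F hq

section Gold

variable {R : Type*} [CommRing R]

def goldLinear (k : ℕ) (a x : R) : R := a * x ^ 2 ^ k + a ^ 2 ^ k * x

theorem map_goldLinear {S : Type*} [CommRing S] (φ : R →+* S) (k : ℕ) (a x : R) :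
    φ (goldLinear k a x) = goldLinear k (φ a) (φ x) := by
  simp only [goldLinear, map_add, map_mul, map_pow]

theorem goldLinear_mul_right (k : ℕ) (a w : R) :
    goldLinear k a (a * w) = a ^ (2 ^ k + 1) * (w ^ 2 ^ k + w) := by
  unfold goldLinear
  ring

variable [CharP R 2] {k : ℕ}

theorem goldLinear_add (a x y : R) :
    goldLinear k a (x + y) = goldLinear k a x + goldLinear k a y := by
  unfold goldLinear
  rw [add_pow_char_pow]
  ring

theorem add_pow_gold_add_pow_gold (a x : R) :
    (x + a) ^ (2 ^ k + 1) + x ^ (2 ^ k + 1) = goldLinear k a x + a ^ (2 ^ k + 1) := by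
  unfold goldLinear
  rw [pow_succ, add_pow_char_pow]
  linear_combination x ^ (2 ^ k + 1) * (CharTwo.two_eq_zero (R := R))

theorem goldLinear_eq_zero_iff {F : Type*} [Field F] [CharP F 2] {a z : F} (ha : a ≠ 0) :
    goldLinear k a z = 0 ↔ (z / a) ^ 2 ^ k = z / a := by
  rw [← mul_div_cancel₀ z ha, goldLinear_mul_right, mul_div_cancel₀ z ha,
    mul_eq_zero_iff_left (pow_ne_zero _ ha), CharTwo.add_eq_zero]

end Gold

section FiniteField

variable {F : Type*} [Field F] [Fintype F] {n k : ℕ}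

theorem pow_four_eq_self_of_pow_two_pow_eq_self (hcard : Fintype.card F = 2 ^ n)
    (hk : k.gcd n = 2) {x : F} (hx : x ^ 2 ^ k = x) : x ^ 4 = x := by
  have := pow_two_pow_gcd_eq_self hx (b := n) (hcard ▸ FiniteField.pow_card x)
  rwa [hk] at this

variable [CharP F 2]

theorem ncard_goldLinear_eq_le (hcard : Fintype.card F = 2 ^ n) (hk : k.gcd n = 2) {a : F}
    (ha : a ≠ 0) (d : F) : {x | goldLinear k a x = d}.ncard ≤ 4 := by
  obtain h | ⟨x₀, hx₀⟩ := Set.eq_empty_or_nonempty {x | goldLinear k a x = d}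
  · simp [h]
  have hsub : {x | goldLinear k a x = d} ⊆ (fun ω => x₀ + a * ω) '' {ω : F | ω ^ 4 = ω} := by
    intro x hx
    have hker : goldLinear k a (x + x₀) = 0 := by
      rw [goldLinear_add, hx, hx₀, CharTwo.add_self_eq_zero]
    refine ⟨(x + x₀) / a, pow_four_eq_self_of_pow_two_pow_eq_self hcard hk
      ((goldLinear_eq_zero_iff ha).1 hker), ?_⟩
    show x₀ + a * ((x + x₀) / a) = x
    rw [mul_div_cancel₀ _ ha]
    linear_combination x₀ * CharTwo.two_eq_zero (R := F)
  calc {x | goldLinear k a x = d}.ncard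
      ≤ ((fun ω => x₀ + a * ω) '' {ω : F | ω ^ 4 = ω}).ncard := Set.ncard_le_ncard hsub
    _ ≤ {ω : F | ω ^ 4 = ω}.ncard := Set.ncard_image_le (Set.toFinite _)
    _ ≤ 4 := Set.ncard_setOf_pow_eq_self_le F (by norm_num)

theorem eq_one_of_pow_two_pow_add_one_eq_one (hcard : Fintype.card F = 2 ^ n)
    (hk : k.gcd n = 2) (hn : n % 4 = 2) {u : F} (hu : u ^ (2 ^ k + 1) = 1) : u = 1 := by
  have hinv : u ^ 2 ^ k = u⁻¹ := eq_inv_of_mul_eq_one_left (by rwa [← pow_succ])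
  have h2k : u ^ 2 ^ (2 * k) = u := by
    rw [two_mul, pow_add, pow_mul, hinv, inv_pow, hinv, inv_inv]
  have h4 : u ^ 2 ^ 2 = u := by
    have := pow_two_pow_gcd_eq_self h2k (b := n) (hcard ▸ FiniteField.pow_card u)
    rwa [Nat.gcd_two_mul_eq_two hk hn] at this
  have hsq : u ^ 2 = 1 := by
    rwa [pow_succ, pow_two_pow_eq_self_of_dvd h4 (hk ▸ Nat.gcd_dvd_left k n), ← sq] at hu
  have : (u + 1) ^ 2 = 0 := by
    linear_combination hsq + (u + 1) * CharTwo.two_eq_zero (R := F)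
  exact CharTwo.add_eq_zero.1 (pow_eq_zero_iff two_ne_zero |>.1 this)

theorem gold_injective (hcard : Fintype.card F = 2 ^ n) (hk : k.gcd n = 2) (hn : n % 4 = 2) :
    Injective fun x : F => x ^ (2 ^ k + 1) := by
  intro x y h
  obtain rfl | hy := eq_or_ne y 0
  · simpa using h
  refine (div_eq_one_iff_eq hy).1 (eq_one_of_pow_two_pow_add_one_eq_one hcard hk hn ?_)
  rw [div_pow]
  exact (div_eq_one_iff_eq (pow_ne_zero _ hy)).2 h

end FiniteField

section SubfieldTwoPow

variable (F : Type*) [Field F] [CharP F 2]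

def subfieldTwoPow (s : ℕ) : Subfield F := (iterateFrobenius F 2 s).eqLocusField (RingHom.id F)

variable {F} {s n m k : ℕ}

theorem mem_subfieldTwoPow {x : F} : x ∈ subfieldTwoPow F s ↔ x ^ 2 ^ s = x := Iff.rfl

theorem mem_subfieldTwoPow_of_pow_four_eq_self (hs : 2 ∣ s) {x : F} (hx : x ^ 4 = x) :
    x ∈ subfieldTwoPow F s :=
  pow_two_pow_eq_self_of_dvd (a := 2) hx hs

variable [Fintype F]

theorem div_mem_subfieldTwoPow_of_goldLinear_eq_zero (hcard : Fintype.card F = 2 ^ n)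
    (hk : k.gcd n = 2) (hs : 2 ∣ s) {u z : F} (hu : u ≠ 0) (hz : goldLinear k u z = 0) :
    z / u ∈ subfieldTwoPow F s :=
  mem_subfieldTwoPow_of_pow_four_eq_self hs <|
    pow_four_eq_self_of_pow_two_pow_eq_self hcard hk ((goldLinear_eq_zero_iff hu).1 hz)

theorem eq_zero_of_pow_two_pow_eq_add (hcard : Fintype.card F = 2 ^ (s * m)) (hm : Odd m)
    {x z : F} (hz : z ∈ subfieldTwoPow F s) (hx : x ^ 2 ^ s = x + z) : z = 0 := by
  have h := (iterateFrobenius F 2 s).toAddMonoidHom.iterate_eq_add_nsmul hz hx m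
  have hperiod : (fun y : F => y ^ 2 ^ s)^[m] x = x := by
    rw [pow_iterate, ← pow_mul, ← hcard]
    exact FiniteField.pow_card x
  change (fun y : F => y ^ 2 ^ s)^[m] x = x + m • z at h
  rw [hperiod, nsmul_eq_mul,
    natCast_eq_one_of_odd_of_two_eq_zero hm CharTwo.two_eq_zero, one_mul] at h
  exact left_eq_add.1 h

theorem pow_two_pow_add_notMem_subfieldTwoPow (hcard : Fintype.card F = 2 ^ (s * m))
    (hm : Odd m) {a : F} (ha : a ∉ subfieldTwoPow F s) : a ^ 2 ^ s + a ∉ subfieldTwoPow F s :=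
  fun h => ha <| mem_subfieldTwoPow.2 <| CharTwo.add_eq_zero.1 <|
    eq_zero_of_pow_two_pow_eq_add hcard hm h
      (by linear_combination (-a) * CharTwo.two_eq_zero (R := F))

theorem mem_subfieldTwoPow_of_goldLinear_mem (hcard : Fintype.card F = 2 ^ (s * m))
    (hm : Odd m) (hk : k.gcd (s * m) = 2) (hs : 2 ∣ s) {a x : F} (ha : a ∈ subfieldTwoPow F s)
    (ha0 : a ≠ 0) (hx : goldLinear k a x ∈ subfieldTwoPow F s) : x ∈ subfieldTwoPow F s := by
  have hfrob : goldLinear k a (x ^ 2 ^ s) = goldLinear k a x := by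
    have h := map_goldLinear (iterateFrobenius F 2 s) k a x
    rwa [hx, ha, RingHom.id_apply, RingHom.id_apply, iterateFrobenius_def, eq_comm] at h
  have hz : goldLinear k a (x ^ 2 ^ s + x) = 0 := by
    rw [goldLinear_add, hfrob, CharTwo.add_self_eq_zero]
  have hzK : x ^ 2 ^ s + x ∈ subfieldTwoPow F s := by
    rw [← mul_div_cancel₀ (x ^ 2 ^ s + x) ha0]
    exact mul_mem ha (div_mem_subfieldTwoPow_of_goldLinear_eq_zero hcard hk hs ha0 hz)
  exact mem_subfieldTwoPow.2 <| CharTwo.add_eq_zero.1 <|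
    eq_zero_of_pow_two_pow_eq_add hcard hm hzK
      (by linear_combination (-x) * CharTwo.two_eq_zero (R := F))

theorem mem_subfieldTwoPow_of_pow_gold_mem (hcard : Fintype.card F = 2 ^ n) (hk : k.gcd n = 2)
    (hn : n % 4 = 2) {x : F} (hx : x ^ (2 ^ k + 1) ∈ subfieldTwoPow F s) :
    x ∈ subfieldTwoPow F s :=
  gold_injective hcard hk hn ((map_pow _ _ _).symm.trans hx)

theorem eq_of_add_pow_gold_add_add_pow_gold_mem (hcard : Fintype.card F = 2 ^ (s * m))
    (hm : Odd m) (hk : k.gcd (s * m) = 2) (hs : 2 ∣ s) {a x y : F} (ha : a ∉ subfieldTwoPow F s)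
    (hx : x ∈ subfieldTwoPow F s) (hy : y ∈ subfieldTwoPow F s)
    (h : (x + a) ^ (2 ^ k + 1) + (y + a) ^ (2 ^ k + 1) ∈ subfieldTwoPow F s) : x = y := by
  set u := a ^ 2 ^ s + a
  have hu : u ∉ subfieldTwoPow F s := pow_two_pow_add_notMem_subfieldTwoPow hcard hm ha
  have hu0 : u ≠ 0 := fun h0 => hu (h0 ▸ zero_mem _)
  have hfrob : (x + a + u) ^ (2 ^ k + 1) + (y + a + u) ^ (2 ^ k + 1)
      = (x + a) ^ (2 ^ k + 1) + (y + a) ^ (2 ^ k + 1) := by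
    have hxa : x + a + u = iterateFrobenius F 2 s x + iterateFrobenius F 2 s a := by
      rw [hx, iterateFrobenius_def]
      linear_combination a * CharTwo.two_eq_zero (R := F)
    have hya : y + a + u = iterateFrobenius F 2 s y + iterateFrobenius F 2 s a := by
      rw [hy, iterateFrobenius_def]
      linear_combination a * CharTwo.two_eq_zero (R := F)
    rw [hxa, hya, ← map_add, ← map_add, ← map_pow, ← map_pow, ← map_add]
    exact h
  have hL : goldLinear k u (x + y) = 0 := by
    rw [show x + y = (x + a) + (y + a) by linear_combination (-a) * CharTwo.two_eq_zero (R := F),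
      goldLinear_add]
    linear_combination hfrob - add_pow_gold_add_pow_gold u (x + a)
      - add_pow_gold_add_pow_gold u (y + a)
      + ((x + a) ^ (2 ^ k + 1) + (y + a) ^ (2 ^ k + 1) - u ^ (2 ^ k + 1))
        * CharTwo.two_eq_zero (R := F)
  -- `x + y ∈ K` lies in the kernel `u 𝔽_4` of `L_u`, while `u ∉ K`
  by_contra hxy
  have hxy0 : x + y ≠ 0 := mt CharTwo.add_eq_zero.1 hxy
  apply hu
  rw [← div_div_cancel₀ (b := u) hxy0]
  exact div_mem (add_mem hx hy) (div_mem_subfieldTwoPow_of_goldLinear_eq_zero hcard hk hs hu0 hL)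

end SubfieldTwoPow

theorem delta_eq_ncard {F : Type*} [Field F] (f : F → F) (a b : F) :
    delta f a b = {x | f (x + a) + f x = b}.ncard :=
  Nat.card_coe_set_eq _

theorem deltaOn_eq_ncard {F : Type*} [Field F] (S : Set F) (f : F → F) (a b : F) :
    deltaOn S f a b = {x | x ∈ S ∧ f (x + a) + f x = b}.ncard :=
  Nat.card_coe_set_eq _

section GoldSwitch

variable {F : Type*} [Field F] [DecidableEq F]

def goldSwitch (s k : ℕ) (f : F → F) (x : F) : F :=
  if x ^ 2 ^ s = x then f x else x ^ (2 ^ k + 1)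

variable [CharP F 2] {s n m k : ℕ} {f : F → F} {a b x : F}

theorem goldSwitch_of_mem (hx : x ∈ subfieldTwoPow F s) : goldSwitch s k f x = f x :=
  if_pos hx

theorem goldSwitch_of_notMem (hx : x ∉ subfieldTwoPow F s) :
    goldSwitch s k f x = x ^ (2 ^ k + 1) :=
  if_neg hx

theorem goldLinear_eq_of_goldSwitch_add_goldSwitch_eq (hx : x ∉ subfieldTwoPow F s)
    (hxa : x + a ∉ subfieldTwoPow F s) (h : goldSwitch s k f (x + a) + goldSwitch s k f x = b) :
    goldLinear k a x = b + a ^ (2 ^ k + 1) := by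
  rw [goldSwitch_of_notMem hxa, goldSwitch_of_notMem hx, add_pow_gold_add_pow_gold] at h
  linear_combination h - a ^ (2 ^ k + 1) * CharTwo.two_eq_zero (R := F)

variable [Fintype F]

theorem goldSwitch_injective (hcard : Fintype.card F = 2 ^ n) (hk : k.gcd n = 2)
    (hn : n % 4 = 2) (hf : Set.InjOn f (subfieldTwoPow F s))
    (hfK : Set.MapsTo f (subfieldTwoPow F s) (subfieldTwoPow F s)) :
    Injective (goldSwitch s k f) := by
  intro x y hxy
  by_cases hx : x ∈ subfieldTwoPow F s <;> by_cases hy : y ∈ subfieldTwoPow F s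
  · rw [goldSwitch_of_mem hx, goldSwitch_of_mem hy] at hxy
    exact hf hx hy hxy
  · rw [goldSwitch_of_mem hx, goldSwitch_of_notMem hy] at hxy
    exact absurd (mem_subfieldTwoPow_of_pow_gold_mem hcard hk hn (hxy ▸ hfK hx)) hy
  · rw [goldSwitch_of_notMem hx, goldSwitch_of_mem hy] at hxy
    exact absurd (mem_subfieldTwoPow_of_pow_gold_mem hcard hk hn (hxy ▸ hfK hy)) hx
  · rw [goldSwitch_of_notMem hx, goldSwitch_of_notMem hy] at hxy
    exact gold_injective hcard hk hn hxy

theorem delta_goldSwitch_le_deltaOn (hcard : Fintype.card F = 2 ^ (s * m)) (hm : Odd m)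
    (hk : k.gcd (s * m) = 2) (hs : 2 ∣ s) (ha : a ∈ subfieldTwoPow F s) (ha0 : a ≠ 0)
    (hb : b ∈ subfieldTwoPow F s) :
    delta (goldSwitch s k f) a b ≤ deltaOn (subfieldTwoPow F s) f a b := by
  rw [delta_eq_ncard, deltaOn_eq_ncard]
  refine Set.ncard_le_ncard fun x (hx : _ = b) => ?_
  by_cases hxK : x ∈ subfieldTwoPow F s
  · rw [goldSwitch_of_mem (add_mem hxK ha), goldSwitch_of_mem hxK] at hx
    exact ⟨hxK, hx⟩
  · have hL := goldLinear_eq_of_goldSwitch_add_goldSwitch_eq hxK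
      (fun h => hxK ((add_mem_cancel_right ha).1 h)) hx
    refine absurd (mem_subfieldTwoPow_of_goldLinear_mem hcard hm hk hs ha ha0 ?_) hxK
    rw [hL]
    exact add_mem hb (pow_mem ha _)

theorem delta_goldSwitch_le_four (hcard : Fintype.card F = 2 ^ n) (hk : k.gcd n = 2)
    (hfK : Set.MapsTo f (subfieldTwoPow F s) (subfieldTwoPow F s))
    (ha : a ∈ subfieldTwoPow F s) (ha0 : a ≠ 0) (hb : b ∉ subfieldTwoPow F s) :
    delta (goldSwitch s k f) a b ≤ 4 := by
  rw [delta_eq_ncard]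
  refine (Set.ncard_le_ncard fun x (hx : _ = b) => ?_).trans
    (ncard_goldLinear_eq_le hcard hk ha0 (b + a ^ (2 ^ k + 1)))
  have hxK : x ∉ subfieldTwoPow F s := fun hxK => hb <| by
    rw [← hx, goldSwitch_of_mem (add_mem hxK ha), goldSwitch_of_mem hxK]
    exact add_mem (hfK (add_mem hxK ha)) (hfK hxK)
  exact goldLinear_eq_of_goldSwitch_add_goldSwitch_eq hxK
    (fun h => hxK ((add_mem_cancel_right ha).1 h)) hx

theorem delta_goldSwitch_le_six (hcard : Fintype.card F = 2 ^ (s * m)) (hm : Odd m)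
    (hk : k.gcd (s * m) = 2) (hs : 2 ∣ s)
    (hfK : Set.MapsTo f (subfieldTwoPow F s) (subfieldTwoPow F s))
    (ha : a ∉ subfieldTwoPow F s) : delta (goldSwitch s k f) a b ≤ 6 := by
  set K := subfieldTwoPow F s
  set A := {x | x ∈ K ∧ goldSwitch s k f (x + a) + goldSwitch s k f x = b}
  have hxa {x} (hx : x ∈ K) : x + a ∉ K := fun h => ha ((add_mem_cancel_left hx).1 h)
  have hA : A.ncard ≤ 1 := (Set.ncard_le_one_iff (Set.toFinite A)).2
      fun {x y} ⟨hx, hxb⟩ ⟨hy, hyb⟩ => by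
    rw [goldSwitch_of_notMem (hxa hx), goldSwitch_of_mem hx] at hxb
    rw [goldSwitch_of_notMem (hxa hy), goldSwitch_of_mem hy] at hyb
    refine eq_of_add_pow_gold_add_add_pow_gold_mem hcard hm hk hs ha hx hy ?_
    rw [show (x + a) ^ (2 ^ k + 1) + (y + a) ^ (2 ^ k + 1) = f x + f y by
      linear_combination hxb - hyb
        + ((y + a) ^ (2 ^ k + 1) - f x) * CharTwo.two_eq_zero (R := F)]
    exact add_mem (hfK hx) (hfK hy)
  have hsub : {x | goldSwitch s k f (x + a) + goldSwitch s k f x = b}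
      ⊆ A ∪ (· + a) '' A ∪ {x | goldLinear k a x = b + a ^ (2 ^ k + 1)} := by
    intro x (hx : _ = b)
    by_cases hxK : x ∈ K
    · exact Or.inl (Or.inl ⟨hxK, hx⟩)
    by_cases hxaK : x + a ∈ K
    · refine Or.inl (Or.inr ⟨x + a, ⟨hxaK, ?_⟩, by simp [add_assoc, CharTwo.add_self_eq_zero]⟩)
      rwa [add_assoc, CharTwo.add_self_eq_zero, add_zero, add_comm]
    · exact Or.inr (goldLinear_eq_of_goldSwitch_add_goldSwitch_eq hxK hxaK hx)
  rw [delta_eq_ncard]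
  calc {x | goldSwitch s k f (x + a) + goldSwitch s k f x = b}.ncard
      ≤ (A ∪ (· + a) '' A ∪ {x | goldLinear k a x = b + a ^ (2 ^ k + 1)}).ncard :=
        Set.ncard_le_ncard hsub
    _ ≤ A.ncard + ((· + a) '' A).ncard + {x | goldLinear k a x = b + a ^ (2 ^ k + 1)}.ncard :=
        (Set.ncard_union_le _ _).trans (add_le_add_left (Set.ncard_union_le _ _) _)
    _ ≤ 1 + 1 + 4 := by
        gcongr
        · exact (Set.ncard_image_le (Set.toFinite _)).trans hA
        · exact ncard_goldLinear_eq_le hcard hk (by rintro rfl; exact ha (zero_mem K)) _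

end GoldSwitch

/-- Let `n = s·m` with `s` even, `s/2` odd and `m` odd, and `gcd(k,n) = 2`.
Let `F = F_{2^n}`, `S = F_{2^s}`, and let `f` be a permutation of `S` which is differentially
at most 6-uniform on `S`. Then the piecewise function `Fn` (equal to `f` on `S` and to the
Gold function `x^(2^k + 1)` off `S`) is a permutation of `F` with differential uniformity
at most 6. -/
theorem stmt3 {F : Type*} [Field F] [Fintype F] (n s m k : ℕ)
    (hn : n = s * m) (hs : Even s) (hs2 : Odd (s / 2)) (hm : Odd m)
    (hk : Nat.gcd k n = 2) (hcard : Fintype.card F = 2 ^ n)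
    (S : Set F) (hS : S = {x : F | x ^ (2 ^ s) = x})
    (f : F → F) (hfperm : Set.BijOn f S S)
    (hf6 : ∀ a ∈ S, a ≠ 0 → ∀ b ∈ S, deltaOn S f a b ≤ 6)
    (Fn : F → F)
    (hFn1 : ∀ x ∈ S, Fn x = f x) (hFn2 : ∀ x ∉ S, Fn x = x ^ (2 ^ k + 1)) :
    Function.Bijective Fn ∧ ∀ a b : F, a ≠ 0 → delta Fn a b ≤ 6 := by
  classical
  have : CharP F 2 := charP_of_card_eq_prime_pow hcard
  subst hn
  obtain rfl : S = subfieldTwoPow F s := hS.trans (Set.ext fun _ => mem_subfieldTwoPow.symm)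
  obtain rfl : Fn = goldSwitch s k f := funext fun x => by
    by_cases hx : x ∈ subfieldTwoPow F s
    · rw [hFn1 x hx, goldSwitch_of_mem hx]
    · rw [hFn2 x hx, goldSwitch_of_notMem hx]
  have hs' : 2 ∣ s := hs.two_dvd
  have hsm : s * m % 4 = 2 := by
    obtain ⟨c, hc⟩ := hs2
    obtain ⟨d, rfl⟩ := hm
    rw [show s = 4 * c + 2 by omega]
    ring_nf
    omega
  refine ⟨Finite.injective_iff_bijective.1
    (goldSwitch_injective hcard hk hsm hfperm.injOn hfperm.mapsTo), fun a b ha => ?_⟩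
  by_cases haK : a ∈ subfieldTwoPow F s
  · by_cases hbK : b ∈ subfieldTwoPow F s
    · exact (delta_goldSwitch_le_deltaOn hcard hm hk hs' haK ha hbK).trans (hf6 a haK ha b hbK)
    · exact (delta_goldSwitch_le_four hcard hk hfperm.mapsTo haK ha hbK).trans (by norm_num)
  · exact delta_goldSwitch_le_six hcard hm hk hs' hfperm.mapsTo haK
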